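/- Let ℙ be a σ-invariant Borel probability measure on Σ_k. Assume there exist an integer N ≥ 1, a constant C > 0 and λ ∈ (0,1) such that ∫_{Σ_k} diam(f_{ϑ_{−1}}∘⋯∘f_{ϑ_{−n}}(M)) dℙ(ϑ) ≤ C λ^n for every n ≥ N. Then ℙ(S_F) = 1, and for every q ∈ (λ, 1), for ℙ-a.e. ϑ ∈ Σ_k there exists a constant C(ϑ) > 0 such that for every n ≥ 1 and every x ∈ M, d(f_{ϑ_{n−1}}∘⋯∘f_{ϑ_0}(x), ρ(σ^n(ϑ))) ≤ C(ϑ) q^n. -/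
import Mathlib


open Set Function Filter Topology MeasureTheory

noncomputable section

/-- The shift map on two-sided sequences. -/
def shiftMap {k : ℕ} (θ : ℤ → Fin k) : ℤ → Fin k := fun i => θ (i + 1)

/-- The step skew product `F(θ, x) = (σ θ, f_{θ₀} x)`. -/
def skewProd {k : ℕ} {M : Type*} (f : Fin k → M → M) :
    (ℤ → Fin k) × M → (ℤ → Fin k) × M :=
  fun p => (shiftMap p.1, f (p.1 0) p.2)

/-- Backward composition `f_{θ₋₁} ∘ ⋯ ∘ f_{θ₋ₙ}`. -/
def bcomp {k : ℕ} {M : Type*} (f : Fin k → M → M) (θ : ℤ → Fin k) : ℕ → M → M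
  | 0 => id
  | n + 1 => bcomp f θ n ∘ f (θ (-((n : ℤ) + 1)))

/-- The spine `I_θ = ⋂_{n ≥ 1} f_{θ₋₁} ∘ ⋯ ∘ f_{θ₋ₙ}(M)`. -/
def spine {k : ℕ} {M : Type*} (f : Fin k → M → M) (θ : ℤ → Fin k) : Set M :=
  ⋂ n : ℕ, bcomp f θ (n + 1) '' Set.univ

/-- The set of weakly hyperbolic sequences: those `θ` whose spine is a singleton. -/
def weakHyp {k : ℕ} {M : Type*} (f : Fin k → M → M) : Set (ℤ → Fin k) :=
  {θ | ∃ x : M, spine f θ = {x}}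

/-- The ω-limit set of a point `z` under iteration of `F`: limits of subsequences
`F^{n_j}(z)` with `n_j → ∞`. -/
def omegaLim {α : Type*} [TopologicalSpace α] (F : α → α) (z : α) : Set α :=
  {w | ∃ φ : ℕ → ℕ, StrictMono φ ∧ Tendsto (fun j => F^[φ j] z) atTop (𝓝 w)}


/-- Forward composition `f_θⁿ = f_{θ_{n-1}} ∘ ⋯ ∘ f_{θ₀}`. -/
def fcomp {k : ℕ} {M : Type*} (f : Fin k → M → M) (θ : ℤ → Fin k) : ℕ → M → M
  | 0 => id
  | n + 1 => f (θ (n : ℤ)) ∘ fcomp f θ n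

set_option linter.unusedSectionVars false
set_option linter.unusedVariables false

section Aux
variable {k : ℕ} {M : Type*} [MetricSpace M] [CompactSpace M] [Nonempty M]
  (f : Fin k → M → M)

/-- diameter of backward image -/
def Dm (n : ℕ) (θ : ℤ → Fin k) : ℝ := Metric.diam (bcomp f θ n '' Set.univ)

lemma bcomp_continuous (hf : ∀ i, Continuous (f i)) (θ : ℤ → Fin k) (n : ℕ) :
    Continuous (bcomp f θ n) := by
  induction n with
  | zero => exact continuous_id
  | succ n ih => exact ih.comp (hf _)

lemma bcomp_image_isCompact (hf : ∀ i, Continuous (f i)) (θ : ℤ → Fin k) (n : ℕ) :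
    IsCompact (bcomp f θ n '' Set.univ) :=
  isCompact_univ.image (bcomp_continuous f hf θ n)

lemma bcomp_succ_image_subset (θ : ℤ → Fin k) (n : ℕ) :
    bcomp f θ (n + 1) '' Set.univ ⊆ bcomp f θ n '' Set.univ := by
  have : bcomp f θ (n + 1) = bcomp f θ n ∘ f (θ (-((n : ℤ) + 1))) := rfl
  rw [this, Set.image_comp]
  exact Set.image_mono (Set.subset_univ _)

lemma bcomp_congr {θ θ' : ℤ → Fin k} {n : ℕ}
    (h : ∀ i : ℕ, i < n → θ (-((i : ℤ) + 1)) = θ' (-((i : ℤ) + 1))) :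
    bcomp f θ n = bcomp f θ' n := by
  induction n with
  | zero => rfl
  | succ n ih =>
    have h1 : bcomp f θ n = bcomp f θ' n := ih fun i hi => h i (Nat.lt_succ_of_lt hi)
    show bcomp f θ n ∘ f (θ (-((n : ℤ) + 1))) = bcomp f θ' n ∘ f (θ' (-((n : ℤ) + 1)))
    rw [h1, h n (Nat.lt_succ_self n)]

lemma Dm_continuous (n : ℕ) : Continuous (Dm f n) := by
  rw [continuous_iff_continuousAt]
  intro θ
  have hev : ∀ᶠ θ' in 𝓝 θ, ∀ i ∈ Set.Iio n, θ' (-((i : ℤ) + 1)) = θ (-((i : ℤ) + 1)) := by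
    rw [Filter.eventually_all_finite (Set.finite_Iio n)]
    intro i _
    have hc : Continuous fun θ' : ℤ → Fin k => θ' (-((i : ℤ) + 1)) := continuous_apply _
    have hmem : ({θ (-((i : ℤ) + 1))} : Set (Fin k)) ∈ 𝓝 (θ (-((i : ℤ) + 1))) :=
      (isOpen_discrete _).mem_nhds rfl
    have := hc.continuousAt.preimage_mem_nhds hmem
    filter_upwards [this] with θ' hθ' using hθ'
  have : ∀ᶠ θ' in 𝓝 θ, Dm f n θ' = Dm f n θ := by
    filter_upwards [hev] with θ' h
    unfold Dm
    rw [bcomp_congr f (fun i hi => h i hi)]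
  exact (tendsto_const_nhds.congr' (by filter_upwards [this] with θ' h using h.symm))

lemma Dm_measurable (n : ℕ) : Measurable (Dm f n) := (Dm_continuous f n).measurable

lemma Dm_nonneg (n : ℕ) (θ : ℤ → Fin k) : 0 ≤ Dm f n θ := Metric.diam_nonneg

lemma Dm_le_diam (n : ℕ) (θ : ℤ → Fin k) :
    Dm f n θ ≤ Metric.diam (Set.univ : Set M) :=
  Metric.diam_mono (Set.subset_univ _) isCompact_univ.isBounded

lemma shiftMap_measurable {k : ℕ} : Measurable (shiftMap (k := k)) :=
  measurable_pi_lambda _ fun i => measurable_pi_apply (i + 1)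

lemma shiftMap_iterate {k : ℕ} (θ : ℤ → Fin k) (n : ℕ) (i : ℤ) :
    (shiftMap^[n] θ) i = θ (i + n) := by
  induction n generalizing θ i with
  | zero => simp
  | succ n ih =>
    rw [Function.iterate_succ_apply, ih]
    show θ (i + n + 1) = _
    congr 1; push_cast; ring

lemma fcomp_succ_eq (θ : ℤ → Fin k) (n : ℕ) :
    fcomp f θ (n + 1) = fcomp f (shiftMap θ) n ∘ f (θ 0) := by
  induction n with
  | zero => rfl
  | succ n ih =>
    show f (θ ((n : ℤ) + 1)) ∘ fcomp f θ (n + 1) = f (shiftMap θ (n : ℤ)) ∘ fcomp f (shiftMap θ) n ∘ f (θ 0)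
    rw [ih]; rfl

lemma bcomp_shift_eq (θ : ℤ → Fin k) (n : ℕ) :
    bcomp f (shiftMap^[n] θ) n = fcomp f θ n := by
  induction n generalizing θ with
  | zero => rfl
  | succ n ih =>
    show bcomp f (shiftMap^[n+1] θ) n ∘ f ((shiftMap^[n+1] θ) (-((n : ℤ) + 1))) = fcomp f θ (n + 1)
    rw [Function.iterate_succ_apply, ih (shiftMap θ), fcomp_succ_eq]
    have h1 : (shiftMap^[n] (shiftMap θ)) (-((n : ℤ) + 1)) = θ 0 := by
      rw [shiftMap_iterate]
      show θ (-((n:ℤ)+1) + n + 1) = θ 0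
      congr 1; ring
    rw [h1]

lemma mem_weakHyp_of_tendsto (hf : ∀ i, Continuous (f i)) (θ : ℤ → Fin k)
    (h : Tendsto (fun n => Dm f n θ) atTop (𝓝 0)) : θ ∈ weakHyp f := by
  set K : ℕ → Set M := fun n => bcomp f θ (n + 1) '' Set.univ with hK
  have hsub : ∀ n, K (n + 1) ⊆ K n := fun n => bcomp_succ_image_subset f θ (n + 1)
  have hne : ∀ n, (K n).Nonempty := fun n => (Set.univ_nonempty).image _
  have hcomp : ∀ n, IsCompact (K n) := fun n => bcomp_image_isCompact f hf θ (n + 1)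
  obtain ⟨x, hx⟩ := IsCompact.nonempty_iInter_of_sequence_nonempty_isCompact_isClosed
    K hsub hne (hcomp 0) (fun n => (hcomp n).isClosed)
  refine ⟨x, ?_⟩
  apply Set.eq_singleton_iff_unique_mem.mpr
  refine ⟨hx, fun y hy => ?_⟩
  have hdist : ∀ n : ℕ, dist y x ≤ Dm f (n + 1) θ := by
    intro n
    exact Metric.dist_le_diam_of_mem (hcomp n).isBounded
      (Set.mem_iInter.mp hy n) (Set.mem_iInter.mp hx n)
  have h' : Tendsto (fun n => Dm f (n + 1) θ) atTop (𝓝 0) := h.comp (tendsto_add_atTop_nat 1)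
  have hle : dist y x ≤ 0 := le_of_tendsto_of_tendsto' tendsto_const_nhds h' hdist
  exact dist_le_zero.mp hle

lemma mem_weakHyp_of_tsum_ne_top (hf : ∀ i, Continuous (f i)) (θ : ℤ → Fin k)
    (h : (∑' n : ℕ, ENNReal.ofReal (Dm f n θ)) ≠ ⊤) : θ ∈ weakHyp f := by
  apply mem_weakHyp_of_tendsto f hf θ
  have h0 : Tendsto (fun n => ENNReal.ofReal (Dm f n θ)) atTop (𝓝 0) :=
    ENNReal.tendsto_atTop_zero_of_tsum_ne_top h
  have h1 : Tendsto (fun n => (ENNReal.ofReal (Dm f n θ)).toReal) atTop (𝓝 (0 : ENNReal).toReal) :=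
    (ENNReal.tendsto_toReal (by simp)).comp h0
  simpa [ENNReal.toReal_ofReal (Dm_nonneg f _ θ)] using h1

end Aux

/-- Exponential fiberwise synchronization: if the expected diameter of the backward
images decays like `C λⁿ`, then `ℙ(S_F) = 1` and, for every `q ∈ (λ, 1)` and
`ℙ`-almost every `θ`, there is `C(θ) > 0` such that
`d(f_θⁿ(x), ρ(σⁿ θ)) ≤ C(θ) qⁿ` for all `n ≥ 1` and all `x ∈ M`. -/
theorem ae_exponential_synchronization
    {k : ℕ} (hk : 1 ≤ k) {M : Type*} [MetricSpace M] [CompactSpace M] [Nonempty M]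
    (f : Fin k → M → M) (hf : ∀ i, Continuous (f i))
    (ℙ : Measure (ℤ → Fin k)) [IsProbabilityMeasure ℙ]
    (hinv : Measure.map shiftMap ℙ = ℙ)
    (ρ : (ℤ → Fin k) → M) (hρ : ∀ θ ∈ weakHyp f, spine f θ = {ρ θ})
    (N : ℕ) (hN : 1 ≤ N) (C : ℝ) (hC : 0 < C) (lam : ℝ) (hlam0 : 0 < lam)
    (hlam1 : lam < 1)
    (hdecay : ∀ n : ℕ, N ≤ n →
      (∫ θ, Metric.diam (bcomp f θ n '' Set.univ) ∂ℙ) ≤ C * lam ^ n) :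
    ℙ (weakHyp f) = 1 ∧
      ∀ q : ℝ, lam < q → q < 1 →
        ∀ᵐ θ ∂ℙ, ∃ Cθ : ℝ, 0 < Cθ ∧
          ∀ n : ℕ, 1 ≤ n → ∀ x : M,
            dist (fcomp f θ n x) (ρ (shiftMap^[n] θ)) ≤ Cθ * q ^ n := by
  classical
  set qd := Metric.diam (Set.univ : Set M) with hqdd
  have hqd0 : 0 ≤ qd := Metric.diam_nonneg
  set A := max C (qd / lam ^ N) with hA
  have hA0 : 0 < A := lt_max_of_lt_left hC
  have hdecay' : ∀ n, N ≤ n → (∫ θ, Dm f n θ ∂ℙ) ≤ C * lam ^ n := hdecay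
  have hDint : ∀ n, Integrable (Dm f n) ℙ := by
    intro n
    refine (integrable_const qd).mono' (Dm_measurable f n).aestronglyMeasurable ?_
    refine ae_of_all _ fun θ => ?_
    rw [Real.norm_eq_abs, abs_of_nonneg (Dm_nonneg f n θ)]
    exact Dm_le_diam f n θ
  have hkey : ∀ n : ℕ, ∫⁻ θ, ENNReal.ofReal (Dm f n θ) ∂ℙ ≤ ENNReal.ofReal (A * lam ^ n) := by
    intro n
    rw [← ofReal_integral_eq_lintegral_ofReal (hDint n) (ae_of_all _ fun θ => Dm_nonneg f n θ)]
    apply ENNReal.ofReal_le_ofReal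
    rcases le_or_gt N n with hn | hn
    · refine (hdecay' n hn).trans ?_
      exact mul_le_mul_of_nonneg_right (le_max_left _ _) (pow_nonneg hlam0.le n)
    · have h1 : ∫ θ, Dm f n θ ∂ℙ ≤ qd := by
        calc ∫ θ, Dm f n θ ∂ℙ ≤ ∫ _, qd ∂ℙ :=
              integral_mono (hDint n) (integrable_const qd) fun θ => Dm_le_diam f n θ
          _ = qd := by simp
      have hlN : lam ^ N ≤ lam ^ n := pow_le_pow_of_le_one hlam0.le hlam1.le hn.le
      have h2 : qd ≤ A * lam ^ n := by
        calc qd = qd / lam ^ N * lam ^ N := (div_mul_cancel₀ _ (pow_pos hlam0 N).ne').symm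
          _ ≤ qd / lam ^ N * lam ^ n :=
              mul_le_mul_of_nonneg_left hlN (div_nonneg hqd0 (pow_pos hlam0 N).le)
          _ ≤ A * lam ^ n := mul_le_mul_of_nonneg_right (le_max_right _ _) (pow_nonneg hlam0.le n)
      exact h1.trans h2
  have hmapiter : ∀ n : ℕ, Measure.map (shiftMap^[n]) ℙ = ℙ := by
    intro n
    induction n with
    | zero => simp
    | succ n ih =>
      rw [Function.iterate_succ',
        ← Measure.map_map shiftMap_measurable (shiftMap_measurable.iterate n), ih, hinv]
  have hshift : ∀ (g : (ℤ → Fin k) → ENNReal), Measurable g → ∀ n : ℕ,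
      ∫⁻ θ, g (shiftMap^[n] θ) ∂ℙ = ∫⁻ θ, g θ ∂ℙ := by
    intro g hg n
    rw [← lintegral_map hg (shiftMap_measurable.iterate n), hmapiter n]
  have hHmeas : Measurable fun θ => ∑' n : ℕ, ENNReal.ofReal (Dm f n θ) :=
    Measurable.ennreal_tsum fun n => (Dm_measurable f n).ennreal_ofReal
  have hHfin : ∫⁻ θ, (∑' n : ℕ, ENNReal.ofReal (Dm f n θ)) ∂ℙ ≠ ⊤ := by
    rw [lintegral_tsum fun n => ((Dm_measurable f n).ennreal_ofReal).aemeasurable]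
    have hsum : Summable fun n : ℕ => A * lam ^ n :=
      (summable_geometric_of_lt_one hlam0.le hlam1).mul_left A
    have hle : (∑' n : ℕ, ∫⁻ θ, ENNReal.ofReal (Dm f n θ) ∂ℙ)
        ≤ ENNReal.ofReal (∑' n : ℕ, A * lam ^ n) := by
      rw [ENNReal.ofReal_tsum_of_nonneg (fun n => by positivity) hsum]
      exact ENNReal.tsum_le_tsum hkey
    exact (hle.trans_lt ENNReal.ofReal_lt_top).ne
  have hwh_ae : ∀ᵐ θ ∂ℙ, θ ∈ weakHyp f := by
    filter_upwards [ae_lt_top hHmeas hHfin] with θ hθ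
    exact mem_weakHyp_of_tsum_ne_top f hf θ hθ.ne
  constructor
  · refine le_antisymm prob_le_one ?_
    have hc : ℙ {θ | θ ∉ weakHyp f} = 0 := ae_iff.mp hwh_ae
    have hu := measure_union_le (μ := ℙ) (weakHyp f) (weakHyp f)ᶜ
    rw [Set.union_compl_self] at hu
    have hcc : ℙ (weakHyp f)ᶜ = 0 := hc
    simpa [measure_univ, hcc] using hu
  · intro q hq1 hq2
    have hq0 : 0 < q := hlam0.trans hq1
    set r := lam / q with hr
    have hr0 : 0 ≤ r := by positivity
    have hr1 : r < 1 := (div_lt_one hq0).mpr hq1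
    have humeas : ∀ n : ℕ,
        Measurable fun θ => ENNReal.ofReal (Dm f n (shiftMap^[n] θ) / q ^ n) := fun n =>
      (((Dm_measurable f n).comp (shiftMap_measurable.iterate n)).div_const _).ennreal_ofReal
    have huint : ∀ n : ℕ, ∫⁻ θ, ENNReal.ofReal (Dm f n (shiftMap^[n] θ) / q ^ n) ∂ℙ
        ≤ ENNReal.ofReal (A * r ^ n) := by
      intro n
      have e1 : ∀ θ : ℤ → Fin k, ENNReal.ofReal (Dm f n (shiftMap^[n] θ) / q ^ n)
          = ENNReal.ofReal (Dm f n (shiftMap^[n] θ)) * ENNReal.ofReal ((q ^ n)⁻¹) := by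
        intro θ
        rw [div_eq_mul_inv, ENNReal.ofReal_mul (Dm_nonneg f n _)]
      simp_rw [e1]
      have hm : Measurable fun θ : ℤ → Fin k => ENNReal.ofReal (Dm f n (shiftMap^[n] θ)) :=
        ((Dm_measurable f n).comp (shiftMap_measurable.iterate n)).ennreal_ofReal
      rw [lintegral_mul_const _ hm]
      have hsh := hshift (fun θ => ENNReal.ofReal (Dm f n θ)) (Dm_measurable f n).ennreal_ofReal n
      rw [hsh]
      calc (∫⁻ θ, ENNReal.ofReal (Dm f n θ) ∂ℙ) * ENNReal.ofReal ((q ^ n)⁻¹)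
          ≤ ENNReal.ofReal (A * lam ^ n) * ENNReal.ofReal ((q ^ n)⁻¹) :=
            mul_le_mul_left (hkey n) _
        _ = ENNReal.ofReal (A * r ^ n) := by
            rw [← ENNReal.ofReal_mul (by positivity)]
            congr 1
            rw [hr, div_pow]
            field_simp
    have hGmeas : Measurable fun θ =>
        ∑' n : ℕ, ENNReal.ofReal (Dm f n (shiftMap^[n] θ) / q ^ n) :=
      Measurable.ennreal_tsum humeas
    have hGfin : ∫⁻ θ, (∑' n : ℕ, ENNReal.ofReal (Dm f n (shiftMap^[n] θ) / q ^ n)) ∂ℙ ≠ ⊤ := by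
      rw [lintegral_tsum fun n => (humeas n).aemeasurable]
      have hsum : Summable fun n : ℕ => A * r ^ n :=
        (summable_geometric_of_lt_one hr0 hr1).mul_left A
      have hle : (∑' n : ℕ, ∫⁻ θ, ENNReal.ofReal (Dm f n (shiftMap^[n] θ) / q ^ n) ∂ℙ)
          ≤ ENNReal.ofReal (∑' n : ℕ, A * r ^ n) := by
        rw [ENNReal.ofReal_tsum_of_nonneg (fun n => by positivity) hsum]
        exact ENNReal.tsum_le_tsum huint
      exact (hle.trans_lt ENNReal.ofReal_lt_top).ne
    have haeWH : ∀ᵐ θ ∂ℙ, ∀ n : ℕ, shiftMap^[n] θ ∈ weakHyp f := by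
      rw [ae_all_iff]
      intro n
      have hfin' : ∫⁻ θ, (∑' m : ℕ, ENNReal.ofReal (Dm f m (shiftMap^[n] θ))) ∂ℙ ≠ ⊤ := by
        rw [hshift _ hHmeas n]; exact hHfin
      filter_upwards [ae_lt_top (hHmeas.comp (shiftMap_measurable.iterate n)) hfin'] with θ hθ
      exact mem_weakHyp_of_tsum_ne_top f hf _ hθ.ne
    filter_upwards [ae_lt_top hGmeas hGfin, haeWH] with θ hG hWH
    set G := ∑' n : ℕ, ENNReal.ofReal (Dm f n (shiftMap^[n] θ) / q ^ n) with hGdef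
    refine ⟨max G.toReal 1, lt_of_lt_of_le one_pos (le_max_right _ _), ?_⟩
    intro n hn x
    have hspine := hρ _ (hWH n)
    have hρmem : ρ (shiftMap^[n] θ) ∈ spine f (shiftMap^[n] θ) := by
      rw [hspine]; exact Set.mem_singleton _
    obtain ⟨m, rfl⟩ : ∃ m, n = m + 1 := ⟨n - 1, (Nat.succ_pred_eq_of_pos hn).symm⟩
    have hmem1 : ρ (shiftMap^[m + 1] θ) ∈ bcomp f (shiftMap^[m + 1] θ) (m + 1) '' Set.univ :=
      Set.mem_iInter.mp hρmem m
    have hmem2 : fcomp f θ (m + 1) x ∈ bcomp f (shiftMap^[m + 1] θ) (m + 1) '' Set.univ := by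
      rw [bcomp_shift_eq]
      exact ⟨x, Set.mem_univ x, rfl⟩
    have hd : dist (fcomp f θ (m + 1) x) (ρ (shiftMap^[m + 1] θ))
        ≤ Dm f (m + 1) (shiftMap^[m + 1] θ) :=
      Metric.dist_le_diam_of_mem (bcomp_image_isCompact f hf _ _).isBounded hmem2 hmem1
    have hterm : ENNReal.ofReal (Dm f (m + 1) (shiftMap^[m + 1] θ) / q ^ (m + 1)) ≤ G :=
      ENNReal.le_tsum (m + 1)
    have hle : Dm f (m + 1) (shiftMap^[m + 1] θ) / q ^ (m + 1) ≤ G.toReal :=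
      (ENNReal.ofReal_le_iff_le_toReal hG.ne).mp hterm
    have hle2 : Dm f (m + 1) (shiftMap^[m + 1] θ) ≤ G.toReal * q ^ (m + 1) :=
      (div_le_iff₀ (pow_pos hq0 _)).mp hle
    calc dist (fcomp f θ (m + 1) x) (ρ (shiftMap^[m + 1] θ))
        ≤ Dm f (m + 1) (shiftMap^[m + 1] θ) := hd
      _ ≤ G.toReal * q ^ (m + 1) := hle2
      _ ≤ max G.toReal 1 * q ^ (m + 1) :=
          mul_le_mul_of_nonneg_right (le_max_left _ _) (pow_nonneg hq0.le _)
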